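/- Assume a²−a+1 ≠ 0 and b²−b+1 ≠ 0, the six Pappus lines L_{C,σ} are pairwise distinct, M1 ≠ M2, and none of the six dual points L*_{C,σ} equals M1 ∩ M2. Let N1,…,N6 be the six Pappus lines obtained by applying the Pappus construction in the dual plane to the triple L*_{C,id}, L*_{C,τ3}, L*_{C,τ3²} on M1 and the triple L*_{C,τ2}, L*_{C,τ2τ3}, L*_{C,τ2τ3²} on M2, and let N1*,…,N6* be their dual points in the original plane. Then {N1*,…,N6*} = {A1, A2, A3, B1, B2, B3} if and only if a ∈ {2, −1, 1/2} and b ∈ {2, −1, 1/2} (in which case the configuration is a super Pappus arrangement). -/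
import Mathlib


noncomputable section

namespace PappusPaper

/-- A representative vector of homogeneous coordinates: a point (or a line,
via its coefficient vector) of `ℙ²(ℂ)` is a nonzero `v : Fin 3 → ℂ` up to scalar. -/
abbrev Pt : Type := Fin 3 → ℂ

/-- Cross product: coefficient vector of the line through two points,
and likewise a representative of the intersection point of two lines. -/
def cp (p q : Pt) : Pt :=
  ![p 1 * q 2 - p 2 * q 1, p 2 * q 0 - p 0 * q 2, p 0 * q 1 - p 1 * q 0]

/-- The point `p = (p 0 : p 1 : p 2)` lies on the line `l 0 * x + l 1 * y + l 2 * z = 0`. -/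
def onL (l p : Pt) : Prop := l 0 * p 0 + l 1 * p 1 + l 2 * p 2 = 0

/-- `p` and `q` represent the same projective point (resp. the same line). -/
def projEq (p q : Pt) : Prop := ∃ t : ℂ, t ≠ 0 ∧ q = t • p

/-- Determinant of the 3×3 matrix whose columns are `p`, `q`, `r`. -/
def det3 (p q r : Pt) : ℂ :=
  p 0 * (q 1 * r 2 - q 2 * r 1) - p 1 * (q 0 * r 2 - q 2 * r 0) +
    p 2 * (q 0 * r 1 - q 1 * r 0)

/-- Three points lie on a common line. -/
def Collin (p q r : Pt) : Prop := ∃ l : Pt, l ≠ 0 ∧ onL l p ∧ onL l q ∧ onL l r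

/-- The cross-ratio `[A,B;C,D]` of four collinear points, computed from an
auxiliary point `O` not on their common line. -/
def crossRatio (O A B C D : Pt) : ℂ :=
  (det3 O A C * det3 O B D) / (det3 O A D * det3 O B C)

/-- The points `A1 = (1:0:0)`, `A2 = (1:a:0)`, `A3 = (0:1:0)` (0-indexed). -/
def ptA (a : ℂ) : Fin 3 → Pt := ![![1, 0, 0], ![1, a, 0], ![0, 1, 0]]

/-- The points `B1 = (1:1:b)`, `B2 = (0:0:1)`, `B3 = (1:1:1)` (0-indexed). -/
def ptB (b : ℂ) : Fin 3 → Pt := ![![1, 1, b], ![0, 0, 1], ![1, 1, 1]]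

/-- The line `L_A : z = 0`. -/
def lineA : Pt := ![0, 0, 1]

/-- The line `L_B : x - y = 0`. -/
def lineB : Pt := ![1, -1, 0]

/-- The intersection point `S = (1:1:0)` of `L_A` and `L_B`. -/
def Spt : Pt := ![1, 1, 0]

/-- Given a triple `P` of points on one line and a triple `Q` of points on another
line, and a permutation `σ` of indices, the three Pappus intersection points
`C_{1,σ} = L(P2,Q_{σ(3)}) ∩ L(P3,Q_{σ(2)})`, `C_{2,σ} = L(P1,Q_{σ(3)}) ∩ L(P3,Q_{σ(1)})`,
`C_{3,σ} = L(P1,Q_{σ(2)}) ∩ L(P2,Q_{σ(1)})` (0-indexed). -/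
def pappusC (P Q : Fin 3 → Pt) (σ : Fin 3 → Fin 3) : Fin 3 → Pt :=
  ![cp (cp (P 1) (Q (σ 2))) (cp (P 2) (Q (σ 1))),
    cp (cp (P 0) (Q (σ 2))) (cp (P 2) (Q (σ 0))),
    cp (cp (P 0) (Q (σ 1))) (cp (P 1) (Q (σ 0)))]

/-- The Pappus line: the line through the (collinear) points
`C_{1,σ}` and `C_{2,σ}`. -/
def pappusLine (P Q : Fin 3 → Pt) (σ : Fin 3 → Fin 3) : Pt :=
  cp (pappusC P Q σ 0) (pappusC P Q σ 1)

/-- The points `C_{1,σ}, C_{2,σ}, C_{3,σ}` of the fixed configuration (0-indexed). -/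
def Cpt (a b : ℂ) (σ : Fin 3 → Fin 3) : Fin 3 → Pt := pappusC (ptA a) (ptB b) σ

/-- The Pappus line `L_{C,σ}` of the fixed configuration. -/
def LC (a b : ℂ) (σ : Fin 3 → Fin 3) : Pt := pappusLine (ptA a) (ptB b) σ

/-- The identity permutation of `{1,2,3}` (0-indexed, as a function). -/
def pid : Fin 3 → Fin 3 := ![0, 1, 2]
/-- `τ₂ = (1↦2, 2↦1, 3↦3)` (0-indexed, as a function). -/
def tau2 : Fin 3 → Fin 3 := ![1, 0, 2]
/-- `τ₃ = (1↦3, 2↦1, 3↦2)` (0-indexed, as a function). -/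
def tau3 : Fin 3 → Fin 3 := ![2, 0, 1]
/-- `τ₃² = (1↦2, 2↦3, 3↦1)` (0-indexed, as a function). -/
def tau3sq : Fin 3 → Fin 3 := ![1, 2, 0]
/-- `τ₂τ₃ = (1↦3, 2↦2, 3↦1)` (0-indexed, as a function). -/
def tau2tau3 : Fin 3 → Fin 3 := ![2, 1, 0]
/-- `τ₂τ₃² = (1↦1, 2↦3, 3↦2)` (0-indexed, as a function). -/
def tau2tau3sq : Fin 3 → Fin 3 := ![0, 2, 1]

/-- The line `M1 : (ab−b+1)x + a(ab−a+1)y + a(b²−b+1)z = 0` of the dual plane. -/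
def M1 (a b : ℂ) : Pt := ![a * b - b + 1, a * (a * b - a + 1), a * (b ^ 2 - b + 1)]

/-- The line `M2 : (a+b−1)x + a(a+b−ab)y + a(b²−b+1)z = 0` of the dual plane. -/
def M2 (a b : ℂ) : Pt := ![a + b - 1, a * (a + b - a * b), a * (b ^ 2 - b + 1)]

/-- The dual points of the three even Pappus lines `L_{C,id}, L_{C,τ₃}, L_{C,τ₃²}`,
lying on `M1`. -/
def Ppts (a b : ℂ) : Fin 3 → Pt := ![LC a b pid, LC a b tau3, LC a b tau3sq]

/-- The dual points of the three odd Pappus lines `L_{C,τ₂}, L_{C,τ₂τ₃}, L_{C,τ₂τ₃²}`,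
lying on `M2`. -/
def Qpts (a b : ℂ) : Fin 3 → Pt := ![LC a b tau2, LC a b tau2tau3, LC a b tau2tau3sq]

/-- The Pappus line `N_σ` of the dual configuration, obtained by applying the Pappus
construction in the dual plane to the two triples of dual points of the Pappus lines;
its coordinate vector is also a representative of its dual point `N_σ*` in the
original plane. -/
def Nline (a b : ℂ) (σ : Fin 3 → Fin 3) : Pt := pappusLine (Ppts a b) (Qpts a b) σ


section Aux
variable (a b : ℂ)

lemma cp_smul_smul (s t : ℂ) (p q : Pt) : cp (s • p) (t • q) = (s * t) • cp p q := by
  funext j; fin_cases j <;> (simp [cp, Matrix.vecHead, Matrix.vecTail]; try ring; try tauto)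

set_option maxHeartbeats 1000000 in
lemma LC_pid : LC a b pid = ![-(a*b), 1, a-1] := by
  funext j; fin_cases j <;> simp [Matrix.vecHead, Matrix.vecTail, LC, pappusLine, pappusC, cp, ptA, ptB, pid] <;> ring

set_option maxHeartbeats 1000000 in
lemma LC_tau2 : LC a b tau2 = ![a-a*b, -1, 1] := by
  funext j; fin_cases j <;> simp [Matrix.vecHead, Matrix.vecTail, LC, pappusLine, pappusC, cp, ptA, ptB, tau2] <;> ring

set_option maxHeartbeats 1000000 in
lemma LC_tau3 : LC a b tau3 = ![a, b-1, -a] := by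
  funext j; fin_cases j <;> simp [Matrix.vecHead, Matrix.vecTail, LC, pappusLine, pappusC, cp, ptA, ptB, tau3] <;> ring

set_option maxHeartbeats 1000000 in
lemma LC_tau3sq : LC a b tau3sq = ![a*b^2-a*b, -b^2, b] := by
  funext j; fin_cases j <;> simp [Matrix.vecHead, Matrix.vecTail, LC, pappusLine, pappusC, cp, ptA, ptB, tau3sq] <;> ring

set_option maxHeartbeats 1000000 in
lemma LC_tau2tau3 : LC a b tau2tau3 = ![-(a*b), b^2, a*b-b] := by
  funext j; fin_cases j <;> simp [Matrix.vecHead, Matrix.vecTail, LC, pappusLine, pappusC, cp, ptA, ptB, tau2tau3] <;> ring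

set_option maxHeartbeats 1000000 in
lemma LC_tau2tau3sq : LC a b tau2tau3sq = ![a*b, 1-b, -a] := by
  funext j; fin_cases j <;> simp [Matrix.vecHead, Matrix.vecTail, LC, pappusLine, pappusC, cp, ptA, ptB, tau2tau3sq] <;> ring

set_option maxHeartbeats 1000000 in
lemma C_pid_0 : cp (cp (LC a b tau3) (LC a b tau2tau3sq)) (cp (LC a b tau3sq) (LC a b tau2tau3)) =
    ((-1*a^2*b^2 + a^2*b^3) : ℂ) • ![(-2 + -1*b + b^2 + a + 2*a*b + -2*a*b^2), (-3*b + 3*b^2), (4 + -2*b + -2*a + a*b)] := by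
  rw [LC_tau3, LC_tau2tau3sq, LC_tau3sq, LC_tau2tau3]
  funext j; fin_cases j <;> (simp [cp, Matrix.vecHead, Matrix.vecTail]; try ring; try tauto)

set_option maxHeartbeats 1000000 in
lemma C_pid_1 : cp (cp (LC a b pid) (LC a b tau2tau3sq)) (cp (LC a b tau3sq) (LC a b tau2)) =
    ((-1*a*b + a*b^2) : ℂ) • ![(-3*a*b + 3*a*b^2), (1 + 2*b + -2*b^2 + -2*a + -1*a*b + a*b^2), (-2 + b + 4*a + -2*a*b)] := by
  rw [LC_pid, LC_tau2tau3sq, LC_tau3sq, LC_tau2]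
  funext j; fin_cases j <;> (simp [cp, Matrix.vecHead, Matrix.vecTail]; try ring; try tauto)

set_option maxHeartbeats 1000000 in
lemma N_pid : Nline a b pid = (a^3*b^3*(b-1)^2*(((b+1)*a+(b-2))*((2-b)*a-(b+1)))) • ![b-2, b-2, 2*b^2-2*b-1] := by
  have h : Nline a b pid = cp (cp (cp (LC a b tau3) (LC a b tau2tau3sq)) (cp (LC a b tau3sq) (LC a b tau2tau3)))
      (cp (cp (LC a b pid) (LC a b tau2tau3sq)) (cp (LC a b tau3sq) (LC a b tau2))) := by
    simp [Matrix.vecHead, Matrix.vecTail, Nline, pappusLine, pappusC, Ppts, Qpts, pid]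
  rw [h, C_pid_0, C_pid_1, cp_smul_smul]
  funext j; fin_cases j <;> (simp [cp, Matrix.vecHead, Matrix.vecTail]; try ring; try tauto)

set_option maxHeartbeats 1000000 in
lemma C_tau2_0 : cp (cp (LC a b tau3) (LC a b tau2tau3sq)) (cp (LC a b tau3sq) (LC a b tau2)) =
    ((a*b + -2*a*b^2 + a*b^3) : ℂ) • ![(-2*a + -2*a*b + a^2 + a^2*b), (1 + b + -2*a + -2*a*b), (3*a)] := by
  rw [LC_tau3, LC_tau2tau3sq, LC_tau3sq, LC_tau2]
  funext j; fin_cases j <;> (simp [cp, Matrix.vecHead, Matrix.vecTail]; try ring; try tauto)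

set_option maxHeartbeats 1000000 in
lemma C_tau2_1 : cp (cp (LC a b pid) (LC a b tau2tau3sq)) (cp (LC a b tau3sq) (LC a b tau2tau3)) =
    ((-1*a*b^2 + a*b^3) : ℂ) • ![(4*a*b + -2*a*b^2 + -2*a^2*b + a^2*b^2), (-2*b + b^2 + 4*a*b + -2*a*b^2), (2 + -1*b + -5*a + a*b + 2*a^2 + -1*a^2*b)] := by
  rw [LC_pid, LC_tau2tau3sq, LC_tau3sq, LC_tau2tau3]
  funext j; fin_cases j <;> (simp [cp, Matrix.vecHead, Matrix.vecTail]; try ring; try tauto)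

set_option maxHeartbeats 1000000 in
lemma N_tau2 : Nline a b tau2 = (a^2*b^3*(b-1)^3*(((b+1)*a+(b-2))*((2-b)*a-(b+1)))) • ![1-2*a, a*(2-a), 0] := by
  have h : Nline a b tau2 = cp (cp (cp (LC a b tau3) (LC a b tau2tau3sq)) (cp (LC a b tau3sq) (LC a b tau2)))
      (cp (cp (LC a b pid) (LC a b tau2tau3sq)) (cp (LC a b tau3sq) (LC a b tau2tau3))) := by
    simp [Matrix.vecHead, Matrix.vecTail, Nline, pappusLine, pappusC, Ppts, Qpts, tau2]
  rw [h, C_tau2_0, C_tau2_1, cp_smul_smul]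
  funext j; fin_cases j <;> (simp [cp, Matrix.vecHead, Matrix.vecTail]; try ring; try tauto)

set_option maxHeartbeats 1000000 in
lemma C_tau3_0 : cp (cp (LC a b tau3) (LC a b tau2tau3)) (cp (LC a b tau3sq) (LC a b tau2)) =
    ((-1*a*b^2 + a*b^3) : ℂ) • ![(-3*a + 3*a*b), (2 + -2*b + -1*b^2 + -1*a + a*b + 2*a*b^2), (-1 + 2*b + 2*a + -4*a*b)] := by
  rw [LC_tau3, LC_tau2tau3, LC_tau3sq, LC_tau2]
  funext j; fin_cases j <;> (simp [cp, Matrix.vecHead, Matrix.vecTail]; try ring; try tauto)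

set_option maxHeartbeats 1000000 in
lemma C_tau3_1 : cp (cp (LC a b pid) (LC a b tau2tau3)) (cp (LC a b tau3sq) (LC a b tau2tau3sq)) =
    ((-1*a*b^2 + a*b^3) : ℂ) • ![(a + -1*a*b + a*b^2 + -2*a^2 + 2*a^2*b + a^2*b^2), (2 + -2*b + -1*b^2 + -1*a + a*b + -1*a*b^2), (-1 + 2*b + a^2 + -2*a^2*b)] := by
  rw [LC_pid, LC_tau2tau3, LC_tau3sq, LC_tau2tau3sq]
  funext j; fin_cases j <;> (simp [cp, Matrix.vecHead, Matrix.vecTail]; try ring; try tauto)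

set_option maxHeartbeats 1000000 in
lemma N_tau3 : Nline a b tau3 = (a^3*b^4*(b-1)^2*(((b+1)*a+(b-2))*((1-2*b)*a+(b-2)))) • ![2*b-1, 2*b-1, b^2+2*b-2] := by
  have h : Nline a b tau3 = cp (cp (cp (LC a b tau3) (LC a b tau2tau3)) (cp (LC a b tau3sq) (LC a b tau2)))
      (cp (cp (LC a b pid) (LC a b tau2tau3)) (cp (LC a b tau3sq) (LC a b tau2tau3sq))) := by
    simp [Matrix.vecHead, Matrix.vecTail, Nline, pappusLine, pappusC, Ppts, Qpts, tau3]
  rw [h, C_tau3_0, C_tau3_1, cp_smul_smul]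
  funext j; fin_cases j <;> (simp [cp, Matrix.vecHead, Matrix.vecTail]; try ring; try tauto)

set_option maxHeartbeats 1000000 in
lemma C_tau3sq_0 : cp (cp (LC a b tau3) (LC a b tau2)) (cp (LC a b tau3sq) (LC a b tau2tau3sq)) =
    ((-1*a*b + a*b^2) : ℂ) • ![(-1*a + a*b + -1*a*b^2 + -1*a^2 + 4*a^2*b + -1*a^2*b^2), (1 + -4*b + b^2 + a + -1*a*b + a*b^2), (1 + b + -1*a^2 + -1*a^2*b)] := by
  rw [LC_tau3, LC_tau2, LC_tau3sq, LC_tau2tau3sq]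
  funext j; fin_cases j <;> (simp [cp, Matrix.vecHead, Matrix.vecTail]; try ring; try tauto)

set_option maxHeartbeats 1000000 in
lemma C_tau3sq_1 : cp (cp (LC a b pid) (LC a b tau2)) (cp (LC a b tau3sq) (LC a b tau2tau3)) =
    ((-1*a^2*b^2 + a^2*b^3) : ℂ) • ![(2 + -5*b + 2*b^2 + -1*a + 4*a*b + -1*a*b^2), (-3*b), (2 + 2*b + -1*a + -1*a*b)] := by
  rw [LC_pid, LC_tau2, LC_tau3sq, LC_tau2tau3]
  funext j; fin_cases j <;> (simp [cp, Matrix.vecHead, Matrix.vecTail]; try ring; try tauto)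

set_option maxHeartbeats 1000000 in
lemma N_tau3sq : Nline a b tau3sq = (a^3*b^3*(b-1)^2*(((b+1)*a+(b-2))*(-(b+1)*a+(2*b-1)))) • ![b+1, b+1, -b^2+4*b-1] := by
  have h : Nline a b tau3sq = cp (cp (cp (LC a b tau3) (LC a b tau2)) (cp (LC a b tau3sq) (LC a b tau2tau3sq)))
      (cp (cp (LC a b pid) (LC a b tau2)) (cp (LC a b tau3sq) (LC a b tau2tau3))) := by
    simp [Matrix.vecHead, Matrix.vecTail, Nline, pappusLine, pappusC, Ppts, Qpts, tau3sq]
  rw [h, C_tau3sq_0, C_tau3sq_1, cp_smul_smul]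
  funext j; fin_cases j <;> (simp [cp, Matrix.vecHead, Matrix.vecTail]; try ring; try tauto)

set_option maxHeartbeats 1000000 in
lemma C_tau2tau3_0 : cp (cp (LC a b tau3) (LC a b tau2)) (cp (LC a b tau3sq) (LC a b tau2tau3)) =
    ((-1*a*b^2 + a*b^3) : ℂ) • ![(2*a*b + -1*a*b^2 + -4*a^2*b + 2*a^2*b^2), (2*b + -1*b^2 + 2*a*b + -1*a*b^2), (-2 + b + -1*a + -1*a*b + a^2 + a^2*b)] := by
  rw [LC_tau3, LC_tau2, LC_tau3sq, LC_tau2tau3]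
  funext j; fin_cases j <;> (simp [cp, Matrix.vecHead, Matrix.vecTail]; try ring; try tauto)

set_option maxHeartbeats 1000000 in
lemma C_tau2tau3_1 : cp (cp (LC a b pid) (LC a b tau2)) (cp (LC a b tau3sq) (LC a b tau2tau3sq)) =
    ((-1*a*b + a*b^2) : ℂ) • ![(-1*a + 2*a*b + 2*a^2 + -4*a^2*b), (-1 + 2*b + -1*a + 2*a*b), (1 + -2*b + -1*a + -1*a*b + a^2 + a^2*b)] := by
  rw [LC_pid, LC_tau2, LC_tau3sq, LC_tau2tau3sq]
  funext j; fin_cases j <;> (simp [cp, Matrix.vecHead, Matrix.vecTail]; try ring; try tauto)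

set_option maxHeartbeats 1000000 in
lemma N_tau2tau3 : Nline a b tau2tau3 = (a^2*b^3*(b-1)^3*(((b+1)*a+(b-2))*(-(b+1)*a+(2*b-1)))) • ![a+1, a*(2*a-1), 0] := by
  have h : Nline a b tau2tau3 = cp (cp (cp (LC a b tau3) (LC a b tau2)) (cp (LC a b tau3sq) (LC a b tau2tau3)))
      (cp (cp (LC a b pid) (LC a b tau2)) (cp (LC a b tau3sq) (LC a b tau2tau3sq))) := by
    simp [Matrix.vecHead, Matrix.vecTail, Nline, pappusLine, pappusC, Ppts, Qpts, tau2tau3]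
  rw [h, C_tau2tau3_0, C_tau2tau3_1, cp_smul_smul]
  funext j; fin_cases j <;> (simp [cp, Matrix.vecHead, Matrix.vecTail]; try ring; try tauto)

set_option maxHeartbeats 1000000 in
lemma C_tau2tau3sq_0 : cp (cp (LC a b tau3) (LC a b tau2tau3)) (cp (LC a b tau3sq) (LC a b tau2tau3sq)) =
    ((-1*a*b^2 + a*b^3) : ℂ) • ![(a + -2*a*b + a^2 + -2*a^2*b), (-2 + 4*b + a + -2*a*b), (-1 + -1*b + a + a*b + -1*a^2 + 2*a^2*b)] := by
  rw [LC_tau3, LC_tau2tau3, LC_tau3sq, LC_tau2tau3sq]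
  funext j; fin_cases j <;> (simp [cp, Matrix.vecHead, Matrix.vecTail]; try ring; try tauto)

set_option maxHeartbeats 1000000 in
lemma C_tau2tau3sq_1 : cp (cp (LC a b pid) (LC a b tau2tau3)) (cp (LC a b tau3sq) (LC a b tau2)) =
    ((a*b^2 + -2*a*b^3 + a*b^4) : ℂ) • ![(-1*a + -1*a*b + -1*a^2 + -1*a^2*b), (2 + 2*b + -1*a + -1*a*b), (-3 + 3*a)] := by
  rw [LC_pid, LC_tau2tau3, LC_tau3sq, LC_tau2]
  funext j; fin_cases j <;> (simp [cp, Matrix.vecHead, Matrix.vecTail]; try ring; try tauto)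

set_option maxHeartbeats 1000000 in
lemma N_tau2tau3sq : Nline a b tau2tau3sq = (a^2*b^4*(b-1)^3*(((b+1)*a+(b-2))*((1-2*b)*a+(b-2)))) • ![2-a, a*(a+1), 0] := by
  have h : Nline a b tau2tau3sq = cp (cp (cp (LC a b tau3) (LC a b tau2tau3)) (cp (LC a b tau3sq) (LC a b tau2tau3sq)))
      (cp (cp (LC a b pid) (LC a b tau2tau3)) (cp (LC a b tau3sq) (LC a b tau2))) := by
    simp [Matrix.vecHead, Matrix.vecTail, Nline, pappusLine, pappusC, Ppts, Qpts, tau2tau3sq]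
  rw [h, C_tau2tau3sq_0, C_tau2tau3sq_1, cp_smul_smul]
  funext j; fin_cases j <;> (simp [cp, Matrix.vecHead, Matrix.vecTail]; try ring; try tauto)

end Aux

def permPid : Equiv.Perm (Fin 3) := Equiv.refl _
def permTau2 : Equiv.Perm (Fin 3) := ⟨tau2, tau2, by decide, by decide⟩
def permTau3 : Equiv.Perm (Fin 3) := ⟨tau3, tau3sq, by decide, by decide⟩
def permTau3sq : Equiv.Perm (Fin 3) := ⟨tau3sq, tau3, by decide, by decide⟩
def permTau2tau3 : Equiv.Perm (Fin 3) := ⟨tau2tau3, tau2tau3, by decide, by decide⟩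
def permTau2tau3sq : Equiv.Perm (Fin 3) := ⟨tau2tau3sq, tau2tau3sq, by decide, by decide⟩

lemma coe_permPid : ⇑permPid = pid := by funext j; fin_cases j <;> rfl
lemma coe_permTau2 : ⇑permTau2 = tau2 := rfl
lemma coe_permTau3 : ⇑permTau3 = tau3 := rfl
lemma coe_permTau3sq : ⇑permTau3sq = tau3sq := rfl
lemma coe_permTau2tau3 : ⇑permTau2tau3 = tau2tau3 := rfl
lemma coe_permTau2tau3sq : ⇑permTau2tau3sq = tau2tau3sq := rfl

lemma perm6 (σ : Equiv.Perm (Fin 3)) : ⇑σ = pid ∨ ⇑σ = tau2 ∨ ⇑σ = tau3 ∨ ⇑σ = tau3sq ∨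
    ⇑σ = tau2tau3 ∨ ⇑σ = tau2tau3sq := by
  revert σ; decide

lemma bk_pid_2 (a : ℂ) (ha0 : a ≠ 0) (ha1 : a ≠ 1) : projEq ![(0:ℂ), 0, 1] (Nline a 2 pid) := by
  refine ⟨(-216) * a^4 * (a-1)^0, by exact mul_ne_zero (mul_ne_zero (by norm_num) (pow_ne_zero _ ha0)) (pow_ne_zero _ (sub_ne_zero.mpr ha1)), ?_⟩
  rw [N_pid]
  funext j; fin_cases j <;> (simp [Matrix.vecHead, Matrix.vecTail]; try ring; try tauto)

lemma bk_pid_h (a : ℂ) (ha0 : a ≠ 0) (ha1 : a ≠ 1) : projEq ![(1:ℂ), 1, 1] (Nline a (1/2) pid) := by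
  refine ⟨((-27/256)) * a^3 * (a-1)^2, by exact mul_ne_zero (mul_ne_zero (by norm_num) (pow_ne_zero _ ha0)) (pow_ne_zero _ (sub_ne_zero.mpr ha1)), ?_⟩
  rw [N_pid]
  funext j; fin_cases j <;> (simp [Matrix.vecHead, Matrix.vecTail]; try ring; try tauto)

lemma bk_pid_m1 (a : ℂ) (ha0 : a ≠ 0) (ha1 : a ≠ 1) : projEq ![(1:ℂ), 1, (-1)] (Nline a (-1) pid) := by
  refine ⟨(-108) * a^4 * (a-1)^0, by exact mul_ne_zero (mul_ne_zero (by norm_num) (pow_ne_zero _ ha0)) (pow_ne_zero _ (sub_ne_zero.mpr ha1)), ?_⟩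
  rw [N_pid]
  funext j; fin_cases j <;> (simp [Matrix.vecHead, Matrix.vecTail]; try ring; try tauto)

lemma bk_tau2_2 (b : ℂ) (hb0 : b ≠ 0) (hb1 : b ≠ 1) : projEq ![(1:ℂ), 0, 0] (Nline 2 b tau2) := by
  refine ⟨(108) * b^4 * (b-1)^4, by exact mul_ne_zero (mul_ne_zero (by norm_num) (pow_ne_zero _ hb0)) (pow_ne_zero _ (sub_ne_zero.mpr hb1)), ?_⟩
  rw [N_tau2]
  funext j; fin_cases j <;> (simp [Matrix.vecHead, Matrix.vecTail]; try ring; try tauto)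

lemma bk_tau2_h (b : ℂ) (hb0 : b ≠ 0) (hb1 : b ≠ 1) : projEq ![(0:ℂ), 1, 0] (Nline (1/2) b tau2) := by
  refine ⟨((-27/64)) * b^4 * (b-1)^4, by exact mul_ne_zero (mul_ne_zero (by norm_num) (pow_ne_zero _ hb0)) (pow_ne_zero _ (sub_ne_zero.mpr hb1)), ?_⟩
  rw [N_tau2]
  funext j; fin_cases j <;> (simp [Matrix.vecHead, Matrix.vecTail]; try ring; try tauto)

lemma bk_tau2_m1 (b : ℂ) (hb0 : b ≠ 0) (hb1 : b ≠ 1) : projEq ![(1:ℂ), (-1), 0] (Nline (-1) b tau2) := by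
  refine ⟨(27) * b^3 * (b-1)^3, by exact mul_ne_zero (mul_ne_zero (by norm_num) (pow_ne_zero _ hb0)) (pow_ne_zero _ (sub_ne_zero.mpr hb1)), ?_⟩
  rw [N_tau2]
  funext j; fin_cases j <;> (simp [Matrix.vecHead, Matrix.vecTail]; try ring; try tauto)

lemma bk_tau2tau3_2 (b : ℂ) (hb0 : b ≠ 0) (hb1 : b ≠ 1) : projEq ![(1:ℂ), 2, 0] (Nline 2 b tau2tau3) := by
  refine ⟨(-108) * b^4 * (b-1)^3, by exact mul_ne_zero (mul_ne_zero (by norm_num) (pow_ne_zero _ hb0)) (pow_ne_zero _ (sub_ne_zero.mpr hb1)), ?_⟩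
  rw [N_tau2tau3]
  funext j; fin_cases j <;> (simp [Matrix.vecHead, Matrix.vecTail]; try ring; try tauto)

lemma bk_tau2tau3_h (b : ℂ) (hb0 : b ≠ 0) (hb1 : b ≠ 1) : projEq ![(1:ℂ), 0, 0] (Nline (1/2) b tau2tau3) := by
  refine ⟨((27/32)) * b^3 * (b-1)^5, by exact mul_ne_zero (mul_ne_zero (by norm_num) (pow_ne_zero _ hb0)) (pow_ne_zero _ (sub_ne_zero.mpr hb1)), ?_⟩
  rw [N_tau2tau3]
  funext j; fin_cases j <;> (simp [Matrix.vecHead, Matrix.vecTail]; try ring; try tauto)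

lemma bk_tau2tau3_m1 (b : ℂ) (hb0 : b ≠ 0) (hb1 : b ≠ 1) : projEq ![(0:ℂ), 1, 0] (Nline (-1) b tau2tau3) := by
  refine ⟨(-27) * b^4 * (b-1)^3, by exact mul_ne_zero (mul_ne_zero (by norm_num) (pow_ne_zero _ hb0)) (pow_ne_zero _ (sub_ne_zero.mpr hb1)), ?_⟩
  rw [N_tau2tau3]
  funext j; fin_cases j <;> (simp [Matrix.vecHead, Matrix.vecTail]; try ring; try tauto)

lemma bk_tau2tau3sq_2 (b : ℂ) (hb0 : b ≠ 0) (hb1 : b ≠ 1) : projEq ![(0:ℂ), 1, 0] (Nline 2 b tau2tau3sq) := by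
  refine ⟨(-216) * b^6 * (b-1)^3, by exact mul_ne_zero (mul_ne_zero (by norm_num) (pow_ne_zero _ hb0)) (pow_ne_zero _ (sub_ne_zero.mpr hb1)), ?_⟩
  rw [N_tau2tau3sq]
  funext j; fin_cases j <;> (simp [Matrix.vecHead, Matrix.vecTail]; try ring; try tauto)

lemma bk_tau2tau3sq_h (b : ℂ) (hb0 : b ≠ 0) (hb1 : b ≠ 1) : projEq ![(1:ℂ), (1/2), 0] (Nline (1/2) b tau2tau3sq) := by
  refine ⟨((-27/32)) * b^4 * (b-1)^4, by exact mul_ne_zero (mul_ne_zero (by norm_num) (pow_ne_zero _ hb0)) (pow_ne_zero _ (sub_ne_zero.mpr hb1)), ?_⟩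
  rw [N_tau2tau3sq]
  funext j; fin_cases j <;> (simp [Matrix.vecHead, Matrix.vecTail]; try ring; try tauto)

lemma bk_tau2tau3sq_m1 (b : ℂ) (hb0 : b ≠ 0) (hb1 : b ≠ 1) : projEq ![(1:ℂ), 0, 0] (Nline (-1) b tau2tau3sq) := by
  refine ⟨(-27) * b^4 * (b-1)^4, by exact mul_ne_zero (mul_ne_zero (by norm_num) (pow_ne_zero _ hb0)) (pow_ne_zero _ (sub_ne_zero.mpr hb1)), ?_⟩
  rw [N_tau2tau3sq]
  funext j; fin_cases j <;> (simp [Matrix.vecHead, Matrix.vecTail]; try ring; try tauto)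

lemma bk_tau3_2 (a : ℂ) (ha0 : a ≠ 0) (ha1 : a ≠ 1) : projEq ![(1:ℂ), 1, 2] (Nline a 2 tau3) := by
  refine ⟨(-432) * a^5 * (a-1)^0, by exact mul_ne_zero (mul_ne_zero (by norm_num) (pow_ne_zero _ ha0)) (pow_ne_zero _ (sub_ne_zero.mpr ha1)), ?_⟩
  rw [N_tau3]
  funext j; fin_cases j <;> (simp [Matrix.vecHead, Matrix.vecTail]; try ring; try tauto)

lemma bk_tau3_h (a : ℂ) (ha0 : a ≠ 0) (ha1 : a ≠ 1) : projEq ![(0:ℂ), 0, 1] (Nline a (1/2) tau3) := by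
  refine ⟨((27/1024)) * a^3 * (a-1)^1, by exact mul_ne_zero (mul_ne_zero (by norm_num) (pow_ne_zero _ ha0)) (pow_ne_zero _ (sub_ne_zero.mpr ha1)), ?_⟩
  rw [N_tau3]
  funext j; fin_cases j <;> (simp [Matrix.vecHead, Matrix.vecTail]; try ring; try tauto)

lemma bk_tau3_m1 (a : ℂ) (ha0 : a ≠ 0) (ha1 : a ≠ 1) : projEq ![(1:ℂ), 1, 1] (Nline a (-1) tau3) := by
  refine ⟨(108) * a^3 * (a-1)^1, by exact mul_ne_zero (mul_ne_zero (by norm_num) (pow_ne_zero _ ha0)) (pow_ne_zero _ (sub_ne_zero.mpr ha1)), ?_⟩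
  rw [N_tau3]
  funext j; fin_cases j <;> (simp [Matrix.vecHead, Matrix.vecTail]; try ring; try tauto)

lemma bk_tau3sq_2 (a : ℂ) (ha0 : a ≠ 0) (ha1 : a ≠ 1) : projEq ![(1:ℂ), 1, 1] (Nline a 2 tau3sq) := by
  refine ⟨(-216) * a^4 * (a-1)^1, by exact mul_ne_zero (mul_ne_zero (by norm_num) (pow_ne_zero _ ha0)) (pow_ne_zero _ (sub_ne_zero.mpr ha1)), ?_⟩
  rw [N_tau3sq]
  funext j; fin_cases j <;> (simp [Matrix.vecHead, Matrix.vecTail]; try ring; try tauto)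

lemma bk_tau3sq_h (a : ℂ) (ha0 : a ≠ 0) (ha1 : a ≠ 1) : projEq ![(1:ℂ), 1, (1/2)] (Nline a (1/2) tau3sq) := by
  refine ⟨((-27/256)) * a^4 * (a-1)^1, by exact mul_ne_zero (mul_ne_zero (by norm_num) (pow_ne_zero _ ha0)) (pow_ne_zero _ (sub_ne_zero.mpr ha1)), ?_⟩
  rw [N_tau3sq]
  funext j; fin_cases j <;> (simp [Matrix.vecHead, Matrix.vecTail]; try ring; try tauto)

lemma bk_tau3sq_m1 (a : ℂ) (ha0 : a ≠ 0) (ha1 : a ≠ 1) : projEq ![(0:ℂ), 0, 1] (Nline a (-1) tau3sq) := by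
  refine ⟨(216) * a^3 * (a-1)^0, by exact mul_ne_zero (mul_ne_zero (by norm_num) (pow_ne_zero _ ha0)) (pow_ne_zero _ (sub_ne_zero.mpr ha1)), ?_⟩
  rw [N_tau3sq]
  funext j; fin_cases j <;> (simp [Matrix.vecHead, Matrix.vecTail]; try ring; try tauto)


set_option maxHeartbeats 1000000 in
/-- **Super Pappus arrangements.** The set of the six dual points `N_σ*` of the
Pappus lines of the dual configuration equals `{A1, A2, A3, B1, B2, B3}` iff
`a ∈ {2, −1, 1/2}` and `b ∈ {2, −1, 1/2}`. -/
theorem super_pappus_iff (a b : ℂ) (ha0 : a ≠ 0) (ha1 : a ≠ 1) (hb0 : b ≠ 0) (hb1 : b ≠ 1)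
    (ha2 : a ^ 2 - a + 1 ≠ 0) (hb2 : b ^ 2 - b + 1 ≠ 0)
    (hLCdist : List.Pairwise (fun p q => ¬ projEq p q)
      [LC a b pid, LC a b tau2, LC a b tau3, LC a b tau3sq, LC a b tau2tau3,
        LC a b tau2tau3sq])
    (hM1M2 : ¬ projEq (M1 a b) (M2 a b))
    (hnotX : ∀ σ ∈ [pid, tau2, tau3, tau3sq, tau2tau3, tau2tau3sq],
      ¬ projEq (cp (M1 a b) (M2 a b)) (LC a b σ)) :
    ((∀ σ : Equiv.Perm (Fin 3), ∃ i : Fin 6,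
        projEq (![ptA a 0, ptA a 1, ptA a 2, ptB b 0, ptB b 1, ptB b 2] i)
          (Nline a b ⇑σ)) ∧
      (∀ i : Fin 6, ∃ σ : Equiv.Perm (Fin 3),
        projEq (![ptA a 0, ptA a 1, ptA a 2, ptB b 0, ptB b 1, ptB b 2] i)
          (Nline a b ⇑σ))) ↔
    ((a = 2 ∨ a = -1 ∨ a = 1 / 2) ∧ (b = 2 ∨ b = -1 ∨ b = 1 / 2)) := by
  constructor
  · rintro ⟨h1, _h2⟩
    constructor
    · -- a-side, from σ = tau2
      obtain ⟨i, hi⟩ := h1 permTau2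
      rw [show ⇑permTau2 = tau2 from rfl, N_tau2] at hi
      set M := a^2*b^3*(b-1)^3*(((b+1)*a+(b-2))*((2-b)*a-(b+1))) with hMdef
      obtain ⟨t, ht, heq⟩ := hi
      fin_cases i
      · -- A1 : a = 2
        have heq' : _ = t • ![(1:ℂ), 0, 0] := heq
        have e0 := congrFun heq' 0
        have e1 := congrFun heq' 1
        simp only [Pi.smul_apply, smul_eq_mul, Matrix.cons_val_zero, Matrix.cons_val_one,
          Matrix.head_cons, mul_one, mul_zero] at e0 e1
        have hM : M ≠ 0 := fun h => ht (by rw [← e0, h, zero_mul])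
        have h2 : a * (2 - a) = 0 := (mul_eq_zero.mp e1).resolve_left hM
        rcases mul_eq_zero.mp h2 with h | h
        · exact absurd h ha0
        · exact Or.inl (by linear_combination -h)
      · -- A2 : a = -1
        have heq' : _ = t • ![(1:ℂ), a, 0] := heq
        have e0 := congrFun heq' 0
        have e1 := congrFun heq' 1
        simp only [Pi.smul_apply, smul_eq_mul, Matrix.cons_val_zero, Matrix.cons_val_one,
          Matrix.head_cons, mul_one, mul_zero] at e0 e1
        have hM : M ≠ 0 := fun h => ht (by rw [← e0, h, zero_mul])
        have h2 : M * (a * (a + 1)) = 0 := by linear_combination e1 - a * e0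
        have h3 := (mul_eq_zero.mp h2).resolve_left hM
        rcases mul_eq_zero.mp h3 with h | h
        · exact absurd h ha0
        · exact Or.inr (Or.inl (by linear_combination h))
      · -- A3 : a = 1/2
        have heq' : _ = t • ![(0:ℂ), 1, 0] := heq
        have e0 := congrFun heq' 0
        have e1 := congrFun heq' 1
        simp only [Pi.smul_apply, smul_eq_mul, Matrix.cons_val_zero, Matrix.cons_val_one,
          Matrix.head_cons, mul_one, mul_zero] at e0 e1
        have hM : M ≠ 0 := fun h => ht (by rw [← e1, h, zero_mul])
        have h2 : (1 : ℂ) - 2*a = 0 := by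
          have := (mul_eq_zero.mp e0).resolve_left hM
          linear_combination this
        exact Or.inr (Or.inr (by linear_combination -(1/2 : ℂ) * h2))
      · -- B1 : impossible
        have heq' : _ = t • ![(1:ℂ), 1, b] := heq
        have e2 := congrFun heq' 2
        simp only [Pi.smul_apply, smul_eq_mul, Matrix.cons_val_zero, Matrix.cons_val_one,
          Matrix.head_cons, Matrix.cons_val_two, Matrix.tail_cons, mul_one, mul_zero] at e2
        exact absurd e2.symm (mul_ne_zero ht hb0)
      · -- B2 : impossible
        have heq' : _ = t • ![(0:ℂ), 0, 1] := heq
        have e2 := congrFun heq' 2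
        simp only [Pi.smul_apply, smul_eq_mul, Matrix.cons_val_zero, Matrix.cons_val_one,
          Matrix.head_cons, Matrix.cons_val_two, Matrix.tail_cons, mul_one, mul_zero] at e2
        exact absurd e2.symm ht
      · -- B3 : impossible
        have heq' : _ = t • ![(1:ℂ), 1, 1] := heq
        have e2 := congrFun heq' 2
        simp only [Pi.smul_apply, smul_eq_mul, Matrix.cons_val_zero, Matrix.cons_val_one,
          Matrix.head_cons, Matrix.cons_val_two, Matrix.tail_cons, mul_one, mul_zero] at e2
        exact absurd e2.symm ht
    · -- b-side, from σ = pid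
      obtain ⟨i, hi⟩ := h1 permPid
      rw [coe_permPid, N_pid] at hi
      set M := a^3*b^3*(b-1)^2*(((b+1)*a+(b-2))*((2-b)*a-(b+1))) with hMdef
      obtain ⟨t, ht, heq⟩ := hi
      fin_cases i
      · -- A1 : impossible
        have heq' : _ = t • ![(1:ℂ), 0, 0] := heq
        have e0 := congrFun heq' 0
        have e1 := congrFun heq' 1
        simp only [Pi.smul_apply, smul_eq_mul, Matrix.cons_val_zero, Matrix.cons_val_one,
          Matrix.head_cons, mul_one, mul_zero] at e0 e1
        exact (ht (e0.symm.trans e1)).elim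
      · -- A2 : impossible
        have heq' : _ = t • ![(1:ℂ), a, 0] := heq
        have e0 := congrFun heq' 0
        have e1 := congrFun heq' 1
        simp only [Pi.smul_apply, smul_eq_mul, Matrix.cons_val_zero, Matrix.cons_val_one,
          Matrix.head_cons, mul_one, mul_zero] at e0 e1
        have h2 : t * (a - 1) = 0 := by linear_combination e0 - e1
        rcases mul_eq_zero.mp h2 with h | h
        · exact absurd h ht
        · exact absurd (by linear_combination h : a = 1) ha1
      · -- A3 : impossible
        have heq' : _ = t • ![(0:ℂ), 1, 0] := heq
        have e0 := congrFun heq' 0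
        have e1 := congrFun heq' 1
        simp only [Pi.smul_apply, smul_eq_mul, Matrix.cons_val_zero, Matrix.cons_val_one,
          Matrix.head_cons, mul_one, mul_zero] at e0 e1
        exact (ht (e1.symm.trans e0)).elim
      · -- B1 : b = -1
        have heq' : _ = t • ![(1:ℂ), 1, b] := heq
        have e0 := congrFun heq' 0
        have e2 := congrFun heq' 2
        simp only [Pi.smul_apply, smul_eq_mul, Matrix.cons_val_zero, Matrix.cons_val_one,
          Matrix.head_cons, Matrix.cons_val_two, Matrix.tail_cons, mul_one, mul_zero] at e0 e2
        have hM : M ≠ 0 := fun h => ht (by rw [← e0, h, zero_mul])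
        have h2 : M * ((b - 1) * (b + 1)) = 0 := by linear_combination e2 - b * e0
        have h3 := (mul_eq_zero.mp h2).resolve_left hM
        rcases mul_eq_zero.mp h3 with h | h
        · exact absurd (by linear_combination h : b = 1) hb1
        · exact Or.inr (Or.inl (by linear_combination h))
      · -- B2 : b = 2
        have heq' : _ = t • ![(0:ℂ), 0, 1] := heq
        have e0 := congrFun heq' 0
        have e2 := congrFun heq' 2
        simp only [Pi.smul_apply, smul_eq_mul, Matrix.cons_val_zero, Matrix.cons_val_one,
          Matrix.head_cons, Matrix.cons_val_two, Matrix.tail_cons, mul_one, mul_zero] at e0 e2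
        have hM : M ≠ 0 := fun h => ht (by rw [← e2, h, zero_mul])
        have h2 := (mul_eq_zero.mp e0).resolve_left hM
        exact Or.inl (by linear_combination h2)
      · -- B3 : b = 1/2
        have heq' : _ = t • ![(1:ℂ), 1, 1] := heq
        have e0 := congrFun heq' 0
        have e2 := congrFun heq' 2
        simp only [Pi.smul_apply, smul_eq_mul, Matrix.cons_val_zero, Matrix.cons_val_one,
          Matrix.head_cons, Matrix.cons_val_two, Matrix.tail_cons, mul_one, mul_zero] at e0 e2
        have hM : M ≠ 0 := fun h => ht (by rw [← e0, h, zero_mul])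
        have h2 : M * ((b - 1) * (2*b - 1)) = 0 := by linear_combination e2 - e0
        have h3 := (mul_eq_zero.mp h2).resolve_left hM
        rcases mul_eq_zero.mp h3 with h | h
        · exact absurd (by linear_combination h : b = 1) hb1
        · exact Or.inr (Or.inr (by linear_combination (1/2 : ℂ) * h))
  · rintro ⟨ha, hb⟩
    constructor
    · intro σ
      rcases perm6 σ with h | h | h | h | h | h <;> rw [h]
      · rcases hb with hb | hb | hb <;> subst hb
        · exact ⟨4, bk_pid_2 a ha0 ha1⟩
        · exact ⟨3, bk_pid_m1 a ha0 ha1⟩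
        · exact ⟨5, bk_pid_h a ha0 ha1⟩
      · rcases ha with ha | ha | ha <;> subst ha
        · exact ⟨0, bk_tau2_2 b hb0 hb1⟩
        · exact ⟨1, bk_tau2_m1 b hb0 hb1⟩
        · exact ⟨2, bk_tau2_h b hb0 hb1⟩
      · rcases hb with hb | hb | hb <;> subst hb
        · exact ⟨3, bk_tau3_2 a ha0 ha1⟩
        · exact ⟨5, bk_tau3_m1 a ha0 ha1⟩
        · exact ⟨4, bk_tau3_h a ha0 ha1⟩
      · rcases hb with hb | hb | hb <;> subst hb
        · exact ⟨5, bk_tau3sq_2 a ha0 ha1⟩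
        · exact ⟨4, bk_tau3sq_m1 a ha0 ha1⟩
        · exact ⟨3, bk_tau3sq_h a ha0 ha1⟩
      · rcases ha with ha | ha | ha <;> subst ha
        · exact ⟨1, bk_tau2tau3_2 b hb0 hb1⟩
        · exact ⟨2, bk_tau2tau3_m1 b hb0 hb1⟩
        · exact ⟨0, bk_tau2tau3_h b hb0 hb1⟩
      · rcases ha with ha | ha | ha <;> subst ha
        · exact ⟨2, bk_tau2tau3sq_2 b hb0 hb1⟩
        · exact ⟨0, bk_tau2tau3sq_m1 b hb0 hb1⟩
        · exact ⟨1, bk_tau2tau3sq_h b hb0 hb1⟩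
    · intro i
      fin_cases i
      · rcases ha with ha | ha | ha <;> subst ha
        · exact ⟨permTau2, bk_tau2_2 b hb0 hb1⟩
        · exact ⟨permTau2tau3sq, bk_tau2tau3sq_m1 b hb0 hb1⟩
        · exact ⟨permTau2tau3, bk_tau2tau3_h b hb0 hb1⟩
      · rcases ha with ha | ha | ha <;> subst ha
        · exact ⟨permTau2tau3, bk_tau2tau3_2 b hb0 hb1⟩
        · exact ⟨permTau2, bk_tau2_m1 b hb0 hb1⟩
        · exact ⟨permTau2tau3sq, bk_tau2tau3sq_h b hb0 hb1⟩
      · rcases ha with ha | ha | ha <;> subst ha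
        · exact ⟨permTau2tau3sq, bk_tau2tau3sq_2 b hb0 hb1⟩
        · exact ⟨permTau2tau3, bk_tau2tau3_m1 b hb0 hb1⟩
        · exact ⟨permTau2, bk_tau2_h b hb0 hb1⟩
      · rcases hb with hb | hb | hb <;> subst hb
        · exact ⟨permTau3, bk_tau3_2 a ha0 ha1⟩
        · exact ⟨permPid, by rw [coe_permPid]; exact bk_pid_m1 a ha0 ha1⟩
        · exact ⟨permTau3sq, bk_tau3sq_h a ha0 ha1⟩
      · rcases hb with hb | hb | hb <;> subst hb
        · exact ⟨permPid, by rw [coe_permPid]; exact bk_pid_2 a ha0 ha1⟩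
        · exact ⟨permTau3sq, bk_tau3sq_m1 a ha0 ha1⟩
        · exact ⟨permTau3, bk_tau3_h a ha0 ha1⟩
      · rcases hb with hb | hb | hb <;> subst hb
        · exact ⟨permTau3sq, bk_tau3sq_2 a ha0 ha1⟩
        · exact ⟨permTau3, bk_tau3_m1 a ha0 ha1⟩
        · exact ⟨permPid, by rw [coe_permPid]; exact bk_pid_h a ha0 ha1⟩


end PappusPaper
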